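/- arXiv:2105.05491 — 2 statements merged into one kernel-verified Lean document; each statement's English description precedes it below -/
import Mathlib

section
/- If a dimensional mapping dim : Borel sets of X → [0,∞) satisfies countable stability (dim(⋃ᵢ Aᵢ) = supᵢ dim(Aᵢ) for countable families), and νₙ → ν setwise (i.e., νₙ(A) → ν(A) for every Borel set A), then liminf_{n→∞} dim^U(νₙ) ≥ dim^U(ν), where dim^U(μ) = inf{dim(A) : A Borel, μ(X \ A) = 0}. -/
/-!
If `dim^U(νₙ) < c` for infinitely many `n`, pick along such a subsequence Borel sets `Aₖ` of full
`ν_{nₖ}`-measure with `dim Aₖ < c`. Their union `B` has `ν_{nₖ}`-null complement for every `k`, so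
setwise convergence forces `μ Bᶜ = 0`, while countable stability gives `dim B ≤ c`.
-/

open MeasureTheory Filter Set
open scoped ENNReal NNReal Topology

/-- The upper measure-dimension mapping induced from a dimensional mapping `dim`:
`dim^U(μ) = inf {dim A : A Borel, μ(X \ A) = 0}`. -/
noncomputable def dimU {X : Type*} [MeasurableSpace X] (dim : Set X → ℝ≥0∞)
    (μ : Measure X) : ℝ≥0∞ :=
  sInf {d | ∃ A : Set X, MeasurableSet A ∧ μ Aᶜ = 0 ∧ dim A = d}

/-- Setwise convergence of measures: `νₙ(A) → ν(A)` for every Borel set `A`. -/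
def SetwiseTendsto {X : Type*} [MeasurableSpace X] (ν : ℕ → Measure X) (μ : Measure X) : Prop :=
  ∀ A : Set X, MeasurableSet A → Tendsto (fun n => ν n A) atTop (nhds (μ A))

/-- Countable stability of a dimensional mapping on Borel sets. -/
def CountablyStable {X : Type*} [MeasurableSpace X] (dim : Set X → ℝ≥0∞) : Prop :=
  ∀ A : ℕ → Set X, (∀ i, MeasurableSet (A i)) → dim (⋃ i, A i) = ⨆ i, dim (A i)

section
variable {X : Type*} [MeasurableSpace X] {dim : Set X → ℝ≥0∞}

theorem dimU_le_of_measure_compl_eq_zero {μ : Measure X} {A : Set X} (hA : MeasurableSet A)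
    (hμA : μ Aᶜ = 0) : dimU dim μ ≤ dim A :=
  sInf_le ⟨A, hA, hμA, rfl⟩

theorem exists_measure_compl_eq_zero_of_dimU_lt {μ : Measure X} {c : ℝ≥0∞}
    (h : dimU dim μ < c) : ∃ A, MeasurableSet A ∧ μ Aᶜ = 0 ∧ dim A < c := by
  obtain ⟨_, ⟨A, hA, hμA, rfl⟩, hlt⟩ := sInf_lt_iff.mp h
  exact ⟨A, hA, hμA, hlt⟩

theorem SetwiseTendsto.measure_eq_zero_of_frequently {ν : ℕ → Measure X} {μ : Measure X}
    (h : SetwiseTendsto ν μ) {s : Set X} (hs : MeasurableSet s)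
    (h0 : ∃ᶠ n in atTop, ν n s = 0) : μ s = 0 :=
  tendsto_nhds_unique_of_frequently_eq (h s hs) tendsto_const_nhds h0

theorem CountablyStable.dimU_le_of_frequently_dimU_lt (hdim : CountablyStable dim)
    {ν : ℕ → Measure X} {μ : Measure X} (hconv : SetwiseTendsto ν μ) {c : ℝ≥0∞}
    (hfreq : ∃ᶠ n in atTop, dimU dim (ν n) < c) : dimU dim μ ≤ c := by
  obtain ⟨φ, hφ, hφc⟩ := extraction_of_frequently_atTop hfreq
  choose A hA hνA hdimA using fun k => exists_measure_compl_eq_zero_of_dimU_lt (hφc k)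
  have hB : MeasurableSet (⋃ k, A k) := .iUnion hA
  have hνB : ∃ᶠ n in atTop, ν n (⋃ k, A k)ᶜ = 0 :=
    hφ.tendsto_atTop.frequently <| Frequently.of_forall fun k =>
      measure_mono_null (compl_subset_compl.mpr (subset_iUnion A k)) (hνA k)
  calc dimU dim μ ≤ dim (⋃ k, A k) :=
        dimU_le_of_measure_compl_eq_zero hB (hconv.measure_eq_zero_of_frequently hB.compl hνB)
    _ = ⨆ k, dim (A k) := hdim A hA
    _ ≤ c := iSup_le fun k => (hdimA k).le

end

theorem dimU_lower_semicontinuous_setwise_general {X : Type*} [MeasurableSpace X]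
    (dim : Set X → ℝ≥0∞) (hdim : CountablyStable dim)
    (ν : ℕ → Measure X) (μ : Measure X) (hconv : SetwiseTendsto ν μ) :
    dimU dim μ ≤ atTop.liminf (fun n => dimU dim (ν n)) :=
  le_of_forall_gt_imp_ge_of_dense fun _ hc =>
    hdim.dimU_le_of_frequently_dimU_lt hconv (frequently_lt_of_liminf_lt (by isBoundedDefault) hc)

/-- If `dim` is countably stable and `νₙ → ν` setwise, then
`liminf dim^U(νₙ) ≥ dim^U(ν)`. -/
theorem dimU_lower_semicontinuous_setwise {X : Type*} [MetricSpace X] [MeasurableSpace X]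
    [BorelSpace X] (dim : Set X → ℝ≥0∞) (hdim : CountablyStable dim)
    (ν : ℕ → Measure X) (μ : Measure X) (hconv : SetwiseTendsto ν μ) :
    dimU dim μ ≤ atTop.liminf (fun n => dimU dim (ν n)) :=
  dimU_lower_semicontinuous_setwise_general dim hdim ν μ hconv
end

section
/- Let ν be a Borel probability measure on a metric space X. Suppose there is a function o : (0,1) → (0,∞) with o(r) → 0 as r → 0, and for all sufficiently small r > 0 there exists a Borel set Y_r with ν(Y_r) > 0 such that for ν-a.e. x ∈ Y_r, ν(B(x,r))·ν(Y_r) ≥ r^{o(r)}. Then lim_{r→0} (log ∫ ν(B(x,r)) dν(x)) / (log r) = 0, i.e., the correlation dimension of ν is 0. -/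
/-!
On `Y_r` every ball has mass at least `r^{o(r)} / ν(Y_r)`, so integrating over `Y_r` alone shows
that the correlation integral lies in `[r^{o(r)}, 1]`. Since `log r < 0`, the ratio
`log (∫ ν(B(x,r)) dν) / log r` is then trapped in `[0, o(r)]`, which tends to `0`.
The integrand is measurable because `x ↦ ν(B(x,r))` is lower semicontinuous: an open ball is
exhausted by concentric balls of smaller radius, each contained in the `r`-balls of nearby centres.
-/

open MeasureTheory Filter Set Metric
open scoped ENNReal NNReal Topology

section MeasureBall

variable {X : Type*} [PseudoMetricSpace X] [MeasurableSpace X]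

theorem exists_lt_measure_ball_of_lt (μ : Measure X) (x : X) {r : ℝ} {c : ℝ≥0∞}
    (hc : c < μ (ball x r)) : ∃ s < r, c < μ (ball x s) := by
  have hmono : Monotone fun s : Iio r => ball x (s : ℝ) := fun _ _ h => ball_subset_ball h
  have hunion : ⋃ s : Iio r, ball x (s : ℝ) = ball x r := by
    simpa only [iUnion_subtype, mem_Iio] using biUnion_lt_ball x r
  rw [← hunion, hmono.measure_iUnion, lt_iSup_iff] at hc
  obtain ⟨⟨s, hs⟩, hcs⟩ := hc
  exact ⟨s, hs, hcs⟩

theorem lowerSemicontinuous_measure_ball (μ : Measure X) (r : ℝ) :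
    LowerSemicontinuous fun x => μ (ball x r) := by
  intro x c hc
  obtain ⟨s, hsr, hcs⟩ := exists_lt_measure_ball_of_lt μ x hc
  filter_upwards [ball_mem_nhds x (sub_pos.2 hsr)] with y hy
  refine hcs.trans_le (measure_mono (ball_subset_ball' ?_))
  rw [mem_ball'] at hy
  linarith

theorem measurable_measure_ball [OpensMeasurableSpace X] (μ : Measure X) (r : ℝ) :
    Measurable fun x => μ (ball x r) :=
  (lowerSemicontinuous_measure_ball μ r).measurable

theorem integrable_toReal_measure_ball [OpensMeasurableSpace X] (μ : Measure X)
    [IsFiniteMeasure μ] (r : ℝ) : Integrable (fun x => (μ (ball x r)).toReal) μ := by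
  refine ⟨(measurable_measure_ball μ r).ennreal_toReal.aestronglyMeasurable, ?_⟩
  refine HasFiniteIntegral.of_bounded (C := μ.real univ) (Eventually.of_forall fun x => ?_)
  rw [Real.norm_eq_abs, abs_of_nonneg ENNReal.toReal_nonneg]
  exact measureReal_mono (subset_univ _)

theorem integral_toReal_measure_ball_le_one [OpensMeasurableSpace X] (μ : Measure X)
    [IsProbabilityMeasure μ] (r : ℝ) : ∫ x, (μ (ball x r)).toReal ∂μ ≤ 1 := by
  calc ∫ x, (μ (ball x r)).toReal ∂μ ≤ ∫ _, (1 : ℝ) ∂μ :=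
        integral_mono (integrable_toReal_measure_ball μ r) (integrable_const 1)
          fun x => (measureReal_mono (subset_univ _)).trans_eq probReal_univ
    _ = 1 := by simp

theorem le_integral_toReal_measure_ball [OpensMeasurableSpace X] (μ : Measure X)
    [IsFiniteMeasure μ] {r a : ℝ} {Y : Set X} (hY : MeasurableSet Y) (hY_pos : 0 < μ Y)
    (hbound : ∀ᵐ x ∂μ, x ∈ Y → a ≤ (μ (ball x r)).toReal * (μ Y).toReal) :
    a ≤ ∫ x, (μ (ball x r)).toReal ∂μ := by
  have hYr : 0 < (μ Y).toReal := ENNReal.toReal_pos hY_pos.ne' (measure_ne_top μ Y)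
  have hint := integrable_toReal_measure_ball μ r
  have hrestrict : ∀ᵐ x ∂μ.restrict Y, a / (μ Y).toReal ≤ (μ (ball x r)).toReal := by
    rw [ae_restrict_iff' hY]
    filter_upwards [hbound] with x hx hxY
    exact (div_le_iff₀ hYr).2 (hx hxY)
  calc a = ∫ _ in Y, a / (μ Y).toReal ∂μ := by
        rw [setIntegral_const, smul_eq_mul, measureReal_def, mul_div_cancel₀ _ hYr.ne']
    _ ≤ ∫ x in Y, (μ (ball x r)).toReal ∂μ :=
        integral_mono_ae (integrable_const _) hint.integrableOn hrestrict
    _ ≤ ∫ x, (μ (ball x r)).toReal ∂μ :=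
        setIntegral_le_integral hint (Eventually.of_forall fun _ => ENNReal.toReal_nonneg)

end MeasureBall

theorem log_div_log_mem_Icc_of_rpow_le {r a I : ℝ} (hr₀ : 0 < r) (hr₁ : r < 1)
    (hlower : r ^ a ≤ I) (hupper : I ≤ 1) :
    Real.log I / Real.log r ∈ Icc 0 a := by
  have hlog_r : Real.log r < 0 := Real.log_neg hr₀ hr₁
  have hI : 0 < I := (Real.rpow_pos_of_pos hr₀ a).trans_le hlower
  have hlog_I : Real.log I ≤ 0 := Real.log_nonpos hI.le hupper
  have hlog_lower : a * Real.log r ≤ Real.log I := by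
    simpa [Real.log_rpow hr₀] using Real.log_le_log (Real.rpow_pos_of_pos hr₀ a) hlower
  exact ⟨div_nonneg_of_nonpos hlog_I hlog_r.le, (div_le_iff_of_neg hlog_r).2 hlog_lower⟩

theorem correlation_dim_zero_of_thick_sets_general {X : Type*} [MetricSpace X] [MeasurableSpace X]
    [BorelSpace X] (ν : Measure X) [IsProbabilityMeasure ν]
    (o : ℝ → ℝ)
    (ho : Tendsto o (nhdsWithin 0 (Set.Ioi 0)) (nhds 0))
    (h : ∀ᶠ r in nhdsWithin (0:ℝ) (Set.Ioi 0), ∃ Y : Set X, MeasurableSet Y ∧ 0 < ν Y ∧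
      ∀ᵐ x ∂ν, x ∈ Y → r ^ o r ≤ (ν (ball x r)).toReal * (ν Y).toReal) :
    Tendsto (fun r : ℝ => Real.log (∫ x, (ν (ball x r)).toReal ∂ν) / Real.log r)
      (nhdsWithin 0 (Set.Ioi 0)) (nhds 0) := by
  have hbounds : ∀ᶠ r in 𝓝[>] (0 : ℝ),
      Real.log (∫ x, (ν (ball x r)).toReal ∂ν) / Real.log r ∈ Icc 0 (o r) := by
    filter_upwards [h, Ioo_mem_nhdsGT one_pos] with r ⟨Y, hY, hY_pos, hbound⟩ ⟨hr₀, hr₁⟩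
    exact log_div_log_mem_Icc_of_rpow_le hr₀ hr₁
      (le_integral_toReal_measure_ball ν hY hY_pos hbound)
      (integral_toReal_measure_ball_le_one ν r)
  exact tendsto_of_tendsto_of_tendsto_of_le_of_le' tendsto_const_nhds ho
    (hbounds.mono fun _ hr => hr.1) (hbounds.mono fun _ hr => hr.2)

/-- If for all small `r` there is a set `Y_r` of positive measure with
`ν(B(x,r))·ν(Y_r) ≥ r^{o(r)}` for a.e. `x ∈ Y_r`, where `o(r) → 0`, then the
correlation dimension of `ν` is `0`. -/
theorem correlation_dim_zero_of_thick_sets {X : Type*} [MetricSpace X] [MeasurableSpace X]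
    [BorelSpace X] (ν : Measure X) [IsProbabilityMeasure ν]
    (o : ℝ → ℝ) (ho_pos : ∀ r ∈ Set.Ioo (0:ℝ) 1, 0 < o r)
    (ho : Tendsto o (nhdsWithin 0 (Set.Ioi 0)) (nhds 0))
    (h : ∀ᶠ r in nhdsWithin (0:ℝ) (Set.Ioi 0), ∃ Y : Set X, MeasurableSet Y ∧ 0 < ν Y ∧
      ∀ᵐ x ∂ν, x ∈ Y → r ^ o r ≤ (ν (ball x r)).toReal * (ν Y).toReal) :
    Tendsto (fun r : ℝ => Real.log (∫ x, (ν (ball x r)).toReal ∂ν) / Real.log r)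
      (nhdsWithin 0 (Set.Ioi 0)) (nhds 0) :=
  correlation_dim_zero_of_thick_sets_general ν o ho h
end
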